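/- Let n, m ≥ 1 be natural numbers. Then d_I(⊕_{i=0}^{n} χ_{[i, i+1)}, ⊕_{i=0}^{m} χ_{[i, i+1)}) equals 0 if n = m and equals 1/2 if n ≠ m. (This computes the even cohomology interleaving distance over ℚ between ℂPⁿ and ℂPᵐ, each mapped to BS¹ by a nullhomotopic map, whose even barcodes are {[0,1), [1,2), …, [n,n+1)} and {[0,1), [1,2), …, [m,m+1)}.) -/

import Mathlib

open scoped ENNReal

/-- A persistence module: a functor from the poset `(ℝ, ≤)` to `K`-vector spaces,
presented by its structure maps. -/
structure PersistenceModule (K : Type) [Field K] where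
  X : ℝ → Type
  [addCommGroupX : ∀ a, AddCommGroup (X a)]
  [moduleX : ∀ a, Module K (X a)]
  map : ∀ {a b : ℝ}, a ≤ b → (X a →ₗ[K] X b)
  map_refl : ∀ a : ℝ, map (le_refl a) = LinearMap.id
  map_trans : ∀ {a b c : ℝ} (hab : a ≤ b) (hbc : b ≤ c),
      map (hab.trans hbc) = (map hbc).comp (map hab)

attribute [instance] PersistenceModule.addCommGroupX PersistenceModule.moduleX

/-- The pair `(φ, ψ)` is an `ε`-interleaving between the persistence modules `F` and `G`:
both are natural transformations (to the `ε`-shifts) and the two triangle identities hold. -/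
structure IsInterleaving (K : Type) [Field K] (ε : ℝ) (F G : PersistenceModule K)
    (φ : ∀ a : ℝ, F.X a →ₗ[K] G.X (a + ε))
    (ψ : ∀ a : ℝ, G.X a →ₗ[K] F.X (a + ε)) : Prop where
  nonneg : 0 ≤ ε
  φ_nat : ∀ {a b : ℝ} (hab : a ≤ b),
      (φ b).comp (F.map hab) = (G.map (show a + ε ≤ b + ε by linarith)).comp (φ a)
  ψ_nat : ∀ {a b : ℝ} (hab : a ≤ b),
      (ψ b).comp (G.map hab) = (F.map (show a + ε ≤ b + ε by linarith)).comp (ψ a)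
  tri₁ : ∀ (a : ℝ) (h : a ≤ a + ε + ε), (ψ (a + ε)).comp (φ a) = F.map h
  tri₂ : ∀ (a : ℝ) (h : a ≤ a + ε + ε), (φ (a + ε)).comp (ψ a) = G.map h

/-- `F` and `G` are `ε`-interleaved. -/
def Interleaved (K : Type) [Field K] (ε : ℝ) (F G : PersistenceModule K) : Prop :=
  ∃ φ ψ, IsInterleaving K ε F G φ ψ

/-- The interleaving distance `d_I(F, G) ∈ [0, ∞]`: the infimum of the set of `ε ≥ 0` such
that `F` and `G` are `ε`-interleaved (`∞` when this set is empty). -/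
noncomputable def interleavingDist (K : Type) [Field K] (F G : PersistenceModule K) : ℝ≥0∞ :=
  sInf {x : ℝ≥0∞ | ∃ ε : ℝ, 0 ≤ ε ∧ Interleaved K ε F G ∧ x = ENNReal.ofReal ε}

attribute [local instance] Classical.propDecidable

lemma subsingleton_ite_bot (K : Type) [Field K] {J : Set ℝ} {a : ℝ} (ha : a ∉ J) :
    Subsingleton ↥(if a ∈ J then (⊤ : Submodule K K) else ⊥) := by
  rw [if_neg ha]
  infer_instance

/-- The interval module `χ_J` associated with an interval `J ⊆ ℝ`: the vector space `K`
at points of `J` (realized as `⊤ ≤ K`), and `0` elsewhere, with identity/zero structure maps. -/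
noncomputable def intervalModule (K : Type) [Field K] (J : Set ℝ) (hJ : J.OrdConnected) :
    PersistenceModule K where
  X a := ↥(if a ∈ J then (⊤ : Submodule K K) else ⊥)
  map {a b} hab :=
    if h : a ∈ J ∧ b ∈ J then
      Submodule.inclusion (le_of_eq (by rw [if_pos h.1, if_pos h.2]))
    else 0
  map_refl a := by
    by_cases ha : a ∈ J
    · rw [dif_pos ⟨ha, ha⟩]
      rfl
    · rw [dif_neg (fun h => ha h.1)]
      haveI := subsingleton_ite_bot K (J := J) ha
      exact LinearMap.ext fun x => Subsingleton.elim _ _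
  map_trans := by
    intro a b c hab hbc
    by_cases hac : a ∈ J ∧ c ∈ J
    · have hb : b ∈ J := hJ.out hac.1 hac.2 ⟨hab, hbc⟩
      rw [dif_pos hac, dif_pos ⟨hb, hac.2⟩, dif_pos ⟨hac.1, hb⟩]
      rfl
    · rw [dif_neg hac]
      rcases not_and_or.mp hac with ha | hc
      · haveI := subsingleton_ite_bot K (J := J) ha
        exact LinearMap.ext fun x => by
          rw [Subsingleton.elim x 0]
          simp
      · haveI := subsingleton_ite_bot K (J := J) hc
        exact LinearMap.ext fun x => Subsingleton.elim _ _

/-- The interval module `χ_{[a,b)}`. -/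
noncomputable def chiIco (K : Type) [Field K] (a b : ℝ) : PersistenceModule K :=
  intervalModule K (Set.Ico a b) Set.ordConnected_Ico

/-- The interval module `χ_{[a,∞)}`. -/
noncomputable def chiIci (K : Type) [Field K] (a : ℝ) : PersistenceModule K :=
  intervalModule K (Set.Ici a) Set.ordConnected_Ici

/-- The zero persistence module `χ_∅`. -/
noncomputable def zeroPM (K : Type) [Field K] : PersistenceModule K :=
  intervalModule K (∅ : Set ℝ) Set.ordConnected_empty

/-- The pointwise direct sum of a family of persistence modules. -/
noncomputable def dsum (K : Type) [Field K] {ι : Type} (F : ι → PersistenceModule K) :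
    PersistenceModule K where
  X a := Π₀ i, (F i).X a
  map {a b} hab := DFinsupp.mapRange.linearMap fun i => (F i).map hab
  map_refl a := by
    have : (fun i => (F i).map (le_refl a))
        = fun i => (LinearMap.id : (F i).X a →ₗ[K] (F i).X a) :=
      funext fun i => (F i).map_refl a
    rw [this]
    exact DFinsupp.mapRange.linearMap_id
  map_trans {a b c} hab hbc := by
    have : (fun i => (F i).map (hab.trans hbc)) =
        fun i => ((F i).map hbc).comp ((F i).map hab) :=
      funext fun i => (F i).map_trans hab hbc
    rw [this]
    exact DFinsupp.mapRange.linearMap_comp _ _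

section Aux

variable {K : Type} [Field K]

lemma PersistenceModule.map_comp_eq (F : PersistenceModule K) {a b c : ℝ} (h1 : a ≤ b)
    (h2 : b ≤ c) (h3 : a ≤ c) : (F.map h2).comp (F.map h1) = F.map h3 :=
  (F.map_trans h1 h2).symm

lemma interleaved_self (F : PersistenceModule K) : Interleaved K 0 F F := by
  refine ⟨fun a => F.map (by linarith), fun a => F.map (by linarith), le_refl 0,
    ?_, ?_, ?_, ?_⟩
  · intro a b hab
    rw [F.map_comp_eq hab _ (by linarith), F.map_comp_eq _ _ (by linarith : a ≤ b + 0)]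
  · intro a b hab
    rw [F.map_comp_eq hab _ (by linarith), F.map_comp_eq _ _ (by linarith : a ≤ b + 0)]
  · intro a h
    exact F.map_comp_eq _ _ h
  · intro a h
    exact F.map_comp_eq _ _ h

lemma Interleaved.symm {ε : ℝ} {F G : PersistenceModule K} (h : Interleaved K ε F G) :
    Interleaved K ε G F := by
  obtain ⟨φ, ψ, h⟩ := h
  exact ⟨ψ, φ, h.nonneg, h.ψ_nat, h.φ_nat, h.tri₂, h.tri₁⟩

end Aux
section Aux2

variable {K : Type} [Field K]

/-- `⊕_{i=0}^{n} χ_{[i,i+1)}`. -/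
noncomputable def cpMod (K : Type) [Field K] (n : ℕ) : PersistenceModule K :=
  dsum K fun i : Fin (n + 1) => chiIco K ((i : ℕ) : ℝ) (((i : ℕ) : ℝ) + 1)

noncomputable def phiHalf (n m : ℕ) (hnm : n + 1 ≤ m + 1) (a : ℝ) :
    (cpMod K n).X a →ₗ[K] (cpMod K m).X (a + 1/2) :=
  DFinsupp.lsum ℕ fun i : Fin (n + 1) =>
    (DFinsupp.lsingle (R := K)
        (M := fun j : Fin (m+1) => (chiIco K ((j : ℕ) : ℝ) (((j : ℕ) : ℝ) + 1)).X (a + 1/2))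
        (Fin.castLE hnm i)).comp
      ((chiIco K ((i : ℕ) : ℝ) (((i : ℕ) : ℝ) + 1)).map (by linarith : a ≤ a + 1/2))

noncomputable def psiHalf (n m : ℕ) (a : ℝ) :
    (cpMod K m).X a →ₗ[K] (cpMod K n).X (a + 1/2) :=
  DFinsupp.lsum ℕ fun j : Fin (m + 1) =>
    if h : (j : ℕ) < n + 1 then
      (DFinsupp.lsingle (R := K)
          (M := fun i : Fin (n+1) => (chiIco K ((i : ℕ) : ℝ) (((i : ℕ) : ℝ) + 1)).X (a + 1/2))
          (⟨(j : ℕ), h⟩ : Fin (n + 1))).comp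
        ((chiIco K ((j : ℕ) : ℝ) (((j : ℕ) : ℝ) + 1)).map (by linarith : a ≤ a + 1/2))
    else 0

end Aux2
section Aux3

variable {K : Type} [Field K]

lemma pm_map_map (F : PersistenceModule K) {a b c : ℝ} (h1 : a ≤ b) (h2 : b ≤ c)
    (h3 : a ≤ c) (x : F.X a) : F.map h2 (F.map h1 x) = F.map h3 x := by
  rw [← LinearMap.comp_apply, F.map_comp_eq h1 h2 h3]

lemma cpMod_map_single (n : ℕ) {a b : ℝ} (h : a ≤ b) (i : Fin (n + 1))
    (x : (chiIco K ((i : ℕ) : ℝ) (((i : ℕ) : ℝ) + 1)).X a) :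
    (cpMod K n).map h (DFinsupp.single i x) = DFinsupp.single (β := fun j : Fin (n+1) =>
      (chiIco K ((j : ℕ) : ℝ) (((j : ℕ) : ℝ) + 1)).X b) i
      ((chiIco K ((i : ℕ) : ℝ) (((i : ℕ) : ℝ) + 1)).map h x) :=
  DFinsupp.mapRange_single (hf := fun j => map_zero _)

lemma phiHalf_single (n m : ℕ) (hnm : n + 1 ≤ m + 1) (a : ℝ) (i : Fin (n + 1))
    (x : (chiIco K ((i : ℕ) : ℝ) (((i : ℕ) : ℝ) + 1)).X a) :
    phiHalf n m hnm a (DFinsupp.single i x) = DFinsupp.single (β := fun j : Fin (m+1) =>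
      (chiIco K ((j : ℕ) : ℝ) (((j : ℕ) : ℝ) + 1)).X (a + 1/2)) (Fin.castLE hnm i)
      ((chiIco K ((i : ℕ) : ℝ) (((i : ℕ) : ℝ) + 1)).map (by linarith : a ≤ a + 1/2) x) := by
  unfold phiHalf
  erw [DFinsupp.lsum_single]
  rfl

lemma psiHalf_single_pos (n m : ℕ) (a : ℝ) (j : Fin (m + 1)) (h : (j : ℕ) < n + 1)
    (x : (chiIco K ((j : ℕ) : ℝ) (((j : ℕ) : ℝ) + 1)).X a) :
    psiHalf n m a (DFinsupp.single j x) = DFinsupp.single (β := fun i : Fin (n+1) =>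
      (chiIco K ((i : ℕ) : ℝ) (((i : ℕ) : ℝ) + 1)).X (a + 1/2)) ⟨(j : ℕ), h⟩
      ((chiIco K ((j : ℕ) : ℝ) (((j : ℕ) : ℝ) + 1)).map (by linarith : a ≤ a + 1/2) x) := by
  unfold psiHalf
  erw [DFinsupp.lsum_single, dif_pos h]
  rfl

lemma psiHalf_single_neg (n m : ℕ) (a : ℝ) (j : Fin (m + 1)) (h : ¬ (j : ℕ) < n + 1)
    (x : (chiIco K ((j : ℕ) : ℝ) (((j : ℕ) : ℝ) + 1)).X a) :
    psiHalf (K := K) n m a (DFinsupp.single j x) = 0 := by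
  unfold psiHalf
  erw [DFinsupp.lsum_single, dif_neg h]
  rfl

lemma interleaved_half (n m : ℕ) (hnm : n ≤ m) :
    Interleaved K (1/2) (cpMod K n) (cpMod K m) := by
  refine ⟨phiHalf n m (by omega), psiHalf n m, by norm_num, ?_, ?_, ?_, ?_⟩
  · intro a b hab
    apply DFinsupp.lhom_ext'
    intro i
    apply LinearMap.ext
    intro x
    erw [LinearMap.comp_apply, LinearMap.comp_apply, LinearMap.comp_apply, LinearMap.comp_apply,
      DFinsupp.lsingle_apply, cpMod_map_single, phiHalf_single, phiHalf_single, cpMod_map_single]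
    congr 1
    trans ((chiIco K ((i : ℕ) : ℝ) (((i : ℕ) : ℝ) + 1)).map (show a ≤ b + 1/2 by linarith) x)
    · exact pm_map_map _ hab (by linarith) _ x
    · exact (pm_map_map _ (by linarith : a ≤ a + 1/2) (by linarith) _ x).symm
  · intro a b hab
    apply DFinsupp.lhom_ext'
    intro j
    apply LinearMap.ext
    intro x
    erw [LinearMap.comp_apply, LinearMap.comp_apply, LinearMap.comp_apply, LinearMap.comp_apply,
      DFinsupp.lsingle_apply, cpMod_map_single]
    by_cases h : (j : ℕ) < n + 1
    · erw [psiHalf_single_pos _ _ _ _ h, psiHalf_single_pos _ _ _ _ h, cpMod_map_single]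
      congr 1
      trans ((chiIco K ((j : ℕ) : ℝ) (((j : ℕ) : ℝ) + 1)).map (show a ≤ b + 1/2 by linarith) x)
      · exact pm_map_map _ hab (by linarith) _ x
      · exact (pm_map_map _ (by linarith : a ≤ a + 1/2) (by linarith) _ x).symm
    · erw [psiHalf_single_neg _ _ _ _ h, psiHalf_single_neg _ _ _ _ h, map_zero]
  · intro a h
    apply DFinsupp.lhom_ext'
    intro i
    apply LinearMap.ext
    intro x
    erw [LinearMap.comp_apply, LinearMap.comp_apply, DFinsupp.lsingle_apply]
    erw [phiHalf_single n m (by omega) a i x]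
    erw [psiHalf_single_pos n m (a + 1/2) (Fin.castLE (by omega : n + 1 ≤ m + 1) i) i.isLt,
      cpMod_map_single]
    congr 1
    exact pm_map_map _ (by linarith : a ≤ a + 1/2) (by linarith) h x
  · intro a h
    apply DFinsupp.lhom_ext'
    intro j
    apply LinearMap.ext
    intro x
    erw [LinearMap.comp_apply, LinearMap.comp_apply, DFinsupp.lsingle_apply, cpMod_map_single]
    by_cases hj : (j : ℕ) < n + 1
    · erw [psiHalf_single_pos _ _ _ _ hj, phiHalf_single]
      congr 1
      exact pm_map_map _ (by linarith : a ≤ a + 1/2) (by linarith) h x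
    · erw [psiHalf_single_neg _ _ _ _ hj, map_zero]
      have hz : (chiIco K ((j : ℕ) : ℝ) (((j : ℕ) : ℝ) + 1)).map h = 0 := by
        rw [chiIco, intervalModule]
        exact dif_neg (fun hc => by
          obtain ⟨⟨h1, h2⟩, ⟨h3, h4⟩⟩ := hc
          linarith)
      rw [hz]
      exact (DFinsupp.single_zero j).symm

end Aux3
section Aux4

variable {K : Type} [Field K]

/-- The element `1` of an interval module at a point of the interval. -/
noncomputable def oneEl (K : Type) [Field K] {J : Set ℝ} (hJ : J.OrdConnected) {a : ℝ}
    (ha : a ∈ J) : (intervalModule K J hJ).X a :=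
  ⟨1, by rw [if_pos ha]; exact Submodule.mem_top⟩

lemma oneEl_ne_zero {J : Set ℝ} (hJ : J.OrdConnected) {a : ℝ} (ha : a ∈ J) :
    oneEl K hJ ha ≠ 0 := by
  intro h
  have : (1 : K) = 0 := congrArg Subtype.val h
  exact one_ne_zero this

lemma map_oneEl {J : Set ℝ} (hJ : J.OrdConnected) {a b : ℝ} (hab : a ≤ b)
    (ha : a ∈ J) (hb : b ∈ J) :
    (intervalModule K J hJ).map hab (oneEl K hJ ha) = oneEl K hJ hb := by
  have h' : (if a ∈ J then (⊤ : Submodule K K) else ⊥) ≤ (if b ∈ J then ⊤ else ⊥) :=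
    le_of_eq (by rw [if_pos ha, if_pos hb])
  have hm : (intervalModule K J hJ).map hab = Submodule.inclusion h' := dif_pos ⟨ha, hb⟩
  rw [hm]
  rfl

lemma half_le_of_interleaved (n m : ℕ) (hnm : n < m) {ε : ℝ}
    (h : Interleaved K ε (cpMod K n) (cpMod K m)) : 1/2 ≤ ε := by
  by_contra hlt
  push_neg at hlt
  obtain ⟨φ, ψ, hI⟩ := h
  have hε0 := hI.nonneg
  obtain ⟨a, ha⟩ : ∃ a : ℝ, a = (m : ℝ) + 1/2 - ε := ⟨_, rfl⟩
  have h2 : a ≤ a + ε + ε := by linarith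
  have ht := hI.tri₂ a h2
  have ham : a ∈ Set.Ico ((Fin.last m : ℕ) : ℝ) (((Fin.last m : ℕ) : ℝ) + 1) := by
    simp only [Fin.val_last, Set.mem_Ico]
    constructor <;> linarith
  have ham2 : a + ε + ε ∈ Set.Ico ((Fin.last m : ℕ) : ℝ) (((Fin.last m : ℕ) : ℝ) + 1) := by
    simp only [Fin.val_last, Set.mem_Ico]
    constructor <;> linarith
  have hv : ∃ v : (chiIco K ((Fin.last m : ℕ) : ℝ) (((Fin.last m : ℕ) : ℝ) + 1)).X a,
      v = oneEl K Set.ordConnected_Ico ham := ⟨_, rfl⟩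
  obtain ⟨v, hv⟩ := hv
  have hx : ∃ x : (cpMod K m).X a,
      x = DFinsupp.single (β := fun j : Fin (m+1) =>
        (chiIco K ((j : ℕ) : ℝ) (((j : ℕ) : ℝ) + 1)).X a) (Fin.last m) v := ⟨_, rfl⟩
  obtain ⟨x, hx⟩ := hx
  -- `ψ a x = 0` since the domain module vanishes at `a + ε`
  have hpsi : ψ a x = 0 := by
    apply DFinsupp.ext
    intro i
    have hni : a + ε ∉ Set.Ico ((i : ℕ) : ℝ) (((i : ℕ) : ℝ) + 1) := by
      simp only [Set.mem_Ico, not_and, not_lt]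
      intro _
      have h1 : (i : ℕ) + 1 ≤ m := by have := i.isLt; omega
      have h1' : ((i : ℕ) : ℝ) + 1 ≤ (m : ℝ) := by exact_mod_cast h1
      linarith
    exact @Subsingleton.elim _ (subsingleton_ite_bot K hni) _ _
  have hLHS : φ (a + ε) (ψ a x) = 0 := by rw [hpsi, map_zero]
  have hmain := DFunLike.congr_fun ht x
  rw [LinearMap.comp_apply, hLHS] at hmain
  -- evaluate at coordinate `Fin.last m`
  have hRHS : (cpMod K m).map h2 x = DFinsupp.single (β := fun j : Fin (m+1) =>
      (chiIco K ((j : ℕ) : ℝ) (((j : ℕ) : ℝ) + 1)).X (a + ε + ε)) (Fin.last m)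
      (oneEl K Set.ordConnected_Ico ham2) := by
    rw [hx, hv]
    show DFinsupp.mapRange.linearMap (fun j : Fin (m+1) =>
        (chiIco K ((j : ℕ) : ℝ) (((j : ℕ) : ℝ) + 1)).map h2) _ = _
    erw [DFinsupp.mapRange.linearMap_apply, DFinsupp.mapRange_single]
    exact congrArg _ (map_oneEl Set.ordConnected_Ico h2 ham ham2)
  rw [hRHS] at hmain
  have hmain' : (0 : Π₀ j : Fin (m+1), (chiIco K ((j : ℕ) : ℝ) (((j : ℕ) : ℝ) + 1)).X
      (a + ε + ε)) = DFinsupp.single (Fin.last m) (oneEl K Set.ordConnected_Ico ham2) := hmain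
  have hcoord := DFunLike.congr_fun hmain' (Fin.last m)
  erw [DFinsupp.zero_apply, DFinsupp.single_eq_same] at hcoord
  exact oneEl_ne_zero Set.ordConnected_Ico ham2 hcoord.symm

end Aux4

/-- `d_I(⊕_{i=0}^{n} χ_{[i,i+1)}, ⊕_{i=0}^{m} χ_{[i,i+1)})` equals `0` if
`n = m` and `1/2` if `n ≠ m`, for `n, m ≥ 1` (the even cohomology interleaving distance
between `ℂPⁿ` and `ℂPᵐ` mapped to `BS¹` by nullhomotopic maps). -/
theorem interleavingDist_CPn_CPm_trivial {K : Type} [Field K] (n m : ℕ) (hn : 1 ≤ n)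
    (hm : 1 ≤ m) :
    (n = m →
      interleavingDist K
        (dsum K fun i : Fin (n + 1) => chiIco K ((i : ℕ) : ℝ) (((i : ℕ) : ℝ) + 1))
        (dsum K fun i : Fin (m + 1) => chiIco K ((i : ℕ) : ℝ) (((i : ℕ) : ℝ) + 1)) = 0) ∧
    (n ≠ m →
      interleavingDist K
        (dsum K fun i : Fin (n + 1) => chiIco K ((i : ℕ) : ℝ) (((i : ℕ) : ℝ) + 1))
        (dsum K fun i : Fin (m + 1) => chiIco K ((i : ℕ) : ℝ) (((i : ℕ) : ℝ) + 1))
        = ENNReal.ofReal (1 / 2)) := by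
  constructor
  · intro hnm
    subst hnm
    refine le_antisymm ?_ zero_le
    refine sInf_le ?_
    exact ⟨0, le_refl 0, interleaved_self _, by simp⟩
  · intro hne
    apply le_antisymm
    · apply sInf_le
      refine ⟨1/2, by norm_num, ?_, rfl⟩
      rcases lt_or_gt_of_ne hne with h | h
      · exact interleaved_half n m h.le
      · exact (interleaved_half m n h.le).symm
    · apply le_sInf
      rintro x ⟨ε, hε0, hint, rfl⟩
      apply ENNReal.ofReal_le_ofReal
      rcases lt_or_gt_of_ne hne with h | h
      · exact half_le_of_interleaved n m h hint
      · exact half_le_of_interleaved m n h hint.symm
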